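/- The vector μ = e − (ζ⁴+1)f + (−ζ−ζ²)(e+f+y) − ζ(−e+f−x) ∈ ℂ⁴ satisfies ρ₀(μ) = ζ·μ (it is an eigenvector of ρ₀⊗ℂ with eigenvalue ζ), and ⟨μ, conj(μ)⟩ = 5(ζ²+ζ³) = 5(√5−1)/2 > 0, where ⟨·,·⟩ is the ℂ-bilinear extension of the form on U⊕V and conj denotes coordinatewise complex conjugation. -/

import Mathlib

open Matrix

/-- Gram matrix of `U ⊕ V` in the basis `e, f, x, y`, with ℂ coefficients. -/
def G₀ : Matrix (Fin 4) (Fin 4) ℂ :=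
  !![0, 1, 0, 0;
     1, 0, 0, 0;
     0, 0, 2, 1;
     0, 0, 1, -2]

/-- The ℂ-bilinear extension of the form on `U ⊕ V`: `⟨u, v⟩ = uᵀ G₀ v`. -/
noncomputable def B (u v : Fin 4 → ℂ) : ℂ := u ⬝ᵥ G₀.mulVec v

/-- The matrix of `ρ₀` (extended ℂ-linearly): `ρ₀(e) = -f`, `ρ₀(f) = -e - f - y`,
`ρ₀(x) = f - x`, `ρ₀(y) = 3f - x + y`. -/
def ρ₀ : Matrix (Fin 4) (Fin 4) ℂ :=
  !![0, -1, 0, 0;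
     -1, -1, 1, 3;
     0, 0, -1, -1;
     0, -1, 0, 1]

/-- `ζ = e^{4πi/5}`, a primitive 5th root of unity. -/
noncomputable def ζ : ℂ := Complex.exp (4 * Real.pi * Complex.I / 5)

/-- The basis vectors `e, f, x, y` of `U ⊕ V`, as complex vectors. -/
def e : Fin 4 → ℂ := ![1, 0, 0, 0]
def f : Fin 4 → ℂ := ![0, 1, 0, 0]
def x : Fin 4 → ℂ := ![0, 0, 1, 0]
def y : Fin 4 → ℂ := ![0, 0, 0, 1]

/-- `μ = e − (ζ⁴+1)f + (−ζ−ζ²)(e+f+y) − ζ(−e+f−x)`. -/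
noncomputable def μ : Fin 4 → ℂ :=
  e - (ζ ^ 4 + 1) • f + (-ζ - ζ ^ 2) • (e + f + y) - ζ • (-e + f - x)

/-! The vector `μ` is a polynomial in `ζ`, and both the eigenvector equation and the value
`5 (z² + z³)` of `⟨μ, μ̄⟩` hold for every primitive fifth root of unity `z`: they only use
`1 + z + z² + z³ + z⁴ = 0`, `z⁵ = 1` and `z̄ = z⁴`. For `ζ = e^{4πi/5}` one has `ζ² = conj ζ³`,
so `ζ² + ζ³ = 2 cos (12π/5) = 2 cos (2π/5) = (√5 - 1)/2`, by the double-angle formula and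
`cos (π/5) = (1 + √5)/4`. -/

open Complex ComplexConjugate Real

noncomputable def muOf (z : ℂ) : Fin 4 → ℂ :=
  e - (z ^ 4 + 1) • f + (-z - z ^ 2) • (e + f + y) - z • (-e + f - x)

lemma muOf_eq_vec (z : ℂ) : muOf z = ![1 - z ^ 2, -z ^ 4 - 1 - 2 * z - z ^ 2, z, -z - z ^ 2] := by
  ext i
  fin_cases i <;>
    simp only [muOf, e, f, x, y, Pi.add_apply, Pi.sub_apply, Pi.neg_apply, Pi.smul_apply,
      smul_eq_mul, Fin.zero_eta, Fin.mk_one, Fin.reduceFinMk, cons_val] <;> ring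

lemma ρ₀_mulVec_muOf {z : ℂ} (hz : 1 + z + z ^ 2 + z ^ 3 + z ^ 4 = 0) :
    ρ₀ *ᵥ muOf z = z • muOf z := by
  ext i
  fin_cases i <;>
    simp only [muOf_eq_vec, ρ₀, mulVec, dotProduct, Fin.sum_univ_four, Pi.smul_apply, smul_eq_mul,
      of_apply, Fin.zero_eta, Fin.mk_one, Fin.reduceFinMk, cons_val]
  all_goals first | ring1 | linear_combination hz | linear_combination z * hz

namespace IsPrimitiveRoot

lemma conj_eq_pow_four {z : ℂ} (hz : IsPrimitiveRoot z 5) : conj z = z ^ 4 := by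
  rw [← inv_eq_conj (hz.norm'_eq_one (by norm_num))]
  exact inv_eq_of_mul_eq_one_right (by rw [← pow_succ', hz.pow_eq_one])

lemma geom_sum_five_eq_zero {z : ℂ} (hz : IsPrimitiveRoot z 5) :
    1 + z + z ^ 2 + z ^ 3 + z ^ 4 = 0 := by
  simpa [Finset.sum_range_succ] using hz.geom_sum_eq_zero (by norm_num)

end IsPrimitiveRoot

lemma B_muOf_conj {z : ℂ} (hz : IsPrimitiveRoot z 5) :
    B (muOf z) (fun i => conj (muOf z i)) = 5 * (z ^ 2 + z ^ 3) := by
  have h5 := hz.pow_eq_one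
  have hsum := hz.geom_sum_five_eq_zero
  simp only [B, G₀, muOf_eq_vec, dotProduct, mulVec, Fin.sum_univ_four, of_apply, cons_val,
    map_sub, map_one, map_pow, map_neg, map_mul, map_ofNat, hz.conj_eq_pow_four]
  -- the coefficient of `h5` is the quotient of the division by `z ^ 5 - 1`
  linear_combination
    (z ^ 13 - z ^ 11 + z ^ 8 + z ^ 7 - z ^ 6 - z ^ 4 + z ^ 3 + z ^ 2 - 2 * z - 2) * h5 - 4 * hsum

lemma ζ_eq_exp : ζ = exp (2 * π * I * ((2 : ℕ) / (5 : ℕ))) := by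
  rw [ζ]; congr 1; push_cast; ring

lemma isPrimitiveRoot_ζ : IsPrimitiveRoot ζ 5 :=
  ζ_eq_exp ▸ isPrimitiveRoot_exp_of_coprime 2 5 (by norm_num) (by norm_num)

lemma sq_add_pow_three_eq_two_mul_re {z : ℂ} (hz : IsPrimitiveRoot z 5) :
    z ^ 2 + z ^ 3 = ((2 * (z ^ 3).re : ℝ) : ℂ) := by
  have hconj : conj (z ^ 3) = z ^ 2 := by
    rw [map_pow, hz.conj_eq_pow_four, ← pow_mul,
      show 4 * 3 = 5 * 2 + 2 by rfl, pow_add, pow_mul, hz.pow_eq_one, one_pow, one_mul]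
  rw [← hconj, add_comm, add_conj]

lemma Real.cos_two_pi_div_five : Real.cos (2 * π / 5) = (√5 - 1) / 4 := by
  have h5 : √5 ^ 2 = 5 := Real.sq_sqrt (by norm_num)
  rw [show 2 * π / 5 = 2 * (π / 5) by ring, Real.cos_two_mul, Real.cos_pi_div_five]
  linear_combination h5 / 8

lemma re_ζ_pow_three : (ζ ^ 3).re = (√5 - 1) / 4 := by
  have harg : ((3 : ℕ) : ℂ) * (4 * π * I / 5) = ((2 * π / 5 + 2 * π : ℝ) : ℂ) * I := by
    push_cast; ring
  rw [ζ, ← Complex.exp_nat_mul, harg, exp_ofReal_mul_I_re, Real.cos_add_two_pi,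
    Real.cos_two_pi_div_five]

theorem stmt12 :
    ρ₀.mulVec μ = ζ • μ ∧
    B μ (fun i => starRingEnd ℂ (μ i)) = 5 * (ζ ^ 2 + ζ ^ 3) ∧
    5 * (ζ ^ 2 + ζ ^ 3) = (↑(5 * (Real.sqrt 5 - 1) / 2) : ℂ) ∧
    0 < 5 * (Real.sqrt 5 - 1) / 2 := by
  rw [show μ = muOf ζ from rfl]
  refine ⟨ρ₀_mulVec_muOf isPrimitiveRoot_ζ.geom_sum_five_eq_zero,
    B_muOf_conj isPrimitiveRoot_ζ, ?_, ?_⟩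
  · rw [sq_add_pow_three_eq_two_mul_re isPrimitiveRoot_ζ, re_ζ_pow_three]
    push_cast; ring
  · have : 1 < √5 := by rw [Real.lt_sqrt zero_le_one]; norm_num
    linarith
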